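/- There exists a tripartite box P with inputs x,y,z ∈ {1,2} and binary outputs a,b,c ∈ {0,1} of the product form P(a,b,c|x,y,z) = δ_{b,0}·Q(a,c|x,y,z) for some family of bipartite distributions Q (so Bob's output is deterministic and P is relativistically causal bilocal across the AC|B cut), satisfying the relativistic causality constraints, whose Svetlichny expression attains the algebraic maximum: |⟨A₁B₁C₁⟩ + ⟨A₁B₁C₂⟩ + ⟨A₂B₁C₁⟩ − ⟨A₂B₁C₂⟩ + ⟨A₁B₂C₁⟩ − ⟨A₁B₂C₂⟩ − ⟨A₂B₂C₁⟩ − ⟨A₂B₂C₂⟩| = 8, where ⟨A_xB_yC_z⟩ := Σ_{a,b,c} (−1)^{a+b+c} P(a,b,c|x,y,z). In particular, since every bilocal box satisfies the Svetlichny inequality (value at most 4), this relativistically causal bilocal box is not bilocal: RCBL ⊄ BL. -/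
import Mathlib


open Finset

/-- sign `(−1)^a` of a binary outcome. -/
def sgn (b : Bool) : ℝ := if b then -1 else 1

/-- Three-party correlator `⟨A_x B_y C_z⟩` (inputs `1, 2` encoded as `false, true`). -/
def corr3 (P : Bool → Bool → Bool → Bool → Bool → Bool → ℝ) (x y z : Bool) : ℝ :=
  ∑ a, ∑ b, ∑ c, sgn a * sgn b * sgn c * P x y z a b c

/-- The bipartite family: `a ⊕ c` deterministically equals `x∨z` if `y`, else `x∧z`,
with `a` uniformly random. -/
noncomputable def Qdef (x y z a c : Bool) : ℝ :=
  if xor a c = (if y then x || z else x && z) then 1/2 else 0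

/-- **A relativistically causal bilocal box maximally violating Svetlichny's
inequality.** There is a tripartite box of the product form
`P(a,b,c|x,y,z) = δ_{b,0}·Q(a,c|x,y,z)` (Bob's output deterministic, so `P` is
relativistically causal bilocal across the `AC|B` cut), satisfying the relativistic
causality constraints, whose Svetlichny expression attains the algebraic maximum `8`. -/
theorem exists_rcbl_box_svetlichny_algebraic_max :
    ∃ (P : Bool → Bool → Bool → Bool → Bool → Bool → ℝ)
      (Q : Bool → Bool → Bool → Bool → Bool → ℝ),
      -- Q is a family of bipartite distributions on (a,c)
      (∀ x y z a c, 0 ≤ Q x y z a c) ∧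
      (∀ x y z, ∑ a, ∑ c, Q x y z a c = 1) ∧
      -- product form: Bob's output is deterministically 0
      (∀ x y z a b c, P x y z a b c = if b = false then Q x y z a c else 0) ∧
      -- P is a tripartite box
      (∀ x y z a b c, 0 ≤ P x y z a b c) ∧
      (∀ x y z, ∑ a, ∑ b, ∑ c, P x y z a b c = 1) ∧
      -- relativistic causality constraints
      (∀ b c y z x x', ∑ a, P x y z a b c = ∑ a, P x' y z a b c) ∧
      (∀ a b x y z z', ∑ c, P x y z a b c = ∑ c, P x y z' a b c) ∧
      (∀ a x y z y' z', ∑ b, ∑ c, P x y z a b c = ∑ b, ∑ c, P x y' z' a b c) ∧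
      (∀ c z x y x' y', ∑ a, ∑ b, P x y z a b c = ∑ a, ∑ b, P x' y' z a b c) ∧
      -- the Svetlichny expression attains its algebraic maximum 8
      (|corr3 P false false false + corr3 P false false true
        + corr3 P true false false - corr3 P true false true
        + corr3 P false true false - corr3 P false true true
        - corr3 P true true false - corr3 P true true true| = 8) := by
  refine ⟨fun x y z a b c => if b = false then Qdef x y z a c else 0, Qdef,
    ?_, ?_, ?_, ?_, ?_, ?_, ?_, ?_, ?_, ?_⟩
  · intro x y z a c
    unfold Qdef; split_ifs <;> norm_num
  · intro x y z
    rcases x <;> rcases y <;> rcases z <;>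
      simp [Fintype.sum_bool, Qdef] <;> norm_num
  · intro x y z a b c; rfl
  · intro x y z a b c
    dsimp only; split
    · unfold Qdef; split_ifs <;> norm_num
    · exact le_refl 0
  · intro x y z
    rcases x <;> rcases y <;> rcases z <;>
      simp [Fintype.sum_bool, Qdef] <;> norm_num
  · intro b c y z x x'
    rcases b <;> rcases c <;> rcases y <;> rcases z <;> rcases x <;> rcases x' <;>
      simp [Fintype.sum_bool, Qdef] <;> norm_num
  · intro a b x y z z'
    rcases a <;> rcases b <;> rcases x <;> rcases y <;> rcases z <;> rcases z' <;>
      simp [Fintype.sum_bool, Qdef] <;> norm_num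
  · intro a x y z y' z'
    rcases a <;> rcases x <;> rcases y <;> rcases z <;> rcases y' <;> rcases z' <;>
      simp [Fintype.sum_bool, Qdef] <;> norm_num
  · intro c z x y x' y'
    rcases c <;> rcases z <;> rcases x <;> rcases y <;> rcases x' <;> rcases y' <;>
      simp [Fintype.sum_bool, Qdef] <;> norm_num
  · norm_num [corr3, Fintype.sum_bool, Qdef, sgn]
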